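/- Let Θ be an inner function with values in L(E), let K_Θ be its model space, let S_Θ be the compressed shift on K_Θ, and let D_* = {(1/z)(Θ(z) − Θ(0))x : x ∈ E}. If f ∈ K_Θ is orthogonal to D_*, then (S_Θ f)(z) = z f(z). -/

import Mathlib

open MeasureTheory Complex ContinuousLinearMap
open scoped ComplexInnerProductSpace

noncomputable section

/-- The circle `𝕋`, realized as `ℝ / 2πℤ`; the point `t` corresponds to `e^{it}`. -/
abbrev Circle2pi : Type := AddCircle (2 * Real.pi)

instance : Fact (0 < 2 * Real.pi) := ⟨by positivity⟩

/-- Normalized Haar (arc-length) measure on the circle. -/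
abbrev haarCircle2pi : Measure Circle2pi := AddCircle.haarAddCircle

variable {E : Type} [NormedAddCommGroup E] [InnerProductSpace ℂ E] [FiniteDimensional ℂ E]

/-- `Θ`, given by its boundary-value function on the circle, is an inner function: it is
(a.e. strongly) measurable, its boundary values are a.e. unitary operators on `E`, and its
Fourier coefficients of negative index vanish (the latter says exactly that `Θ` is the
boundary-value function of a bounded analytic `L(E)`-valued function on the unit disc,
i.e. an element of `H^∞(L(E))`). -/
structure IsInner (Θ : Circle2pi → (E →L[ℂ] E)) : Prop where
  meas : AEStronglyMeasurable Θ haarCircle2pi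
  unit : ∀ᵐ t ∂haarCircle2pi, Θ t ∈ unitary (E →L[ℂ] E)
  anal : ∀ n : ℤ, n < 0 → fourierCoeff Θ n = 0

/-- Membership in the Hardy space `H²(E)`, viewed as the subspace of `L²(E)` of functions
whose Fourier coefficients of negative index vanish. -/
def MemH2 (f : Lp E 2 haarCircle2pi) : Prop :=
  ∀ n : ℤ, n < 0 → fourierCoeff (⇑f) n = 0

/-- Membership in the model space `K_Θ = H²(E) ⊖ Θ H²(E)`: `f` belongs to `H²(E)` and is
orthogonal to `Θ H²(E)`. -/
def MemK (Θ : Circle2pi → (E →L[ℂ] E)) (f : Lp E 2 haarCircle2pi) : Prop :=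
  MemH2 f ∧ ∀ g : Lp E 2 haarCircle2pi, MemH2 g →
    ∫ t, ⟪f t, Θ t (g t)⟫ ∂haarCircle2pi = 0

/-- The boundary values of `Θ̃(z) = Θ(z̄)*`, namely `Θ̃(e^{it}) = Θ(e^{-it})*`. -/
def tild (Θ : Circle2pi → (E →L[ℂ] E)) : Circle2pi → (E →L[ℂ] E) :=
  fun t => adjoint (Θ (-t))

/-- `τ` is the operator on `L²(E)` given by `(τ f)(e^{it}) = e^{-it} Θ(e^{-it})* f(e^{-it})`. -/
def IsTau (Θ : Circle2pi → (E →L[ℂ] E))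
    (τ : Lp E 2 haarCircle2pi →L[ℂ] Lp E 2 haarCircle2pi) : Prop :=
  ∀ f : Lp E 2 haarCircle2pi,
    (⇑(τ f)) =ᵐ[haarCircle2pi] fun t => fourier (-1) t • (adjoint (Θ (-t))) (f (-t))

/-- `P` is the orthogonal projection of `L²(E)` onto the model space `K_Θ`:
its range lies in `K_Θ`, it fixes `K_Θ`, and `f - P f` is orthogonal to `K_Θ`. -/
def IsProjK (Θ : Circle2pi → (E →L[ℂ] E))
    (P : Lp E 2 haarCircle2pi →L[ℂ] Lp E 2 haarCircle2pi) : Prop :=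
  (∀ f, MemK Θ (P f)) ∧ (∀ f, MemK Θ f → P f = f) ∧
    ∀ f g, MemK Θ g → ⟪f - P f, g⟫ = 0

/-- `S` acts on the model space `K_Θ` as the compressed shift `S_Θ f = P_Θ (z f)`:
for `f ∈ K_Θ`, `S f ∈ K_Θ` and `S f - z f` is orthogonal to `K_Θ`, i.e.
`⟪S f, g⟫ = ⟪z f, g⟫` for all `g ∈ K_Θ`. -/
def IsCompShift (Θ : Circle2pi → (E →L[ℂ] E))
    (S : Lp E 2 haarCircle2pi →L[ℂ] Lp E 2 haarCircle2pi) : Prop :=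
  ∀ f, MemK Θ f → MemK Θ (S f) ∧
    ∀ g, MemK Θ g → ⟪S f, g⟫ = ∫ t, ⟪fourier 1 t • f t, g t⟫ ∂haarCircle2pi

/-- `A` acts on the model space `K_Θ` as the adjoint `S_Θ*` of the compressed shift `S`:
for `f ∈ K_Θ`, `A f ∈ K_Θ` and `⟪A f, g⟫ = ⟪f, S g⟫` for all `g ∈ K_Θ`. -/
def IsCompShiftAdj (Θ : Circle2pi → (E →L[ℂ] E))
    (S A : Lp E 2 haarCircle2pi →L[ℂ] Lp E 2 haarCircle2pi) : Prop :=
  ∀ f, MemK Θ f → MemK Θ (A f) ∧ ∀ g, MemK Θ g → ⟪A f, g⟫ = ⟪f, S g⟫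

/-- The subspace `D = {(I - Θ(z) Θ(0)*) x : x ∈ E}` of `K_Θ`, described through boundary
values; here `Θ(0)` is the 0-th Fourier coefficient of `Θ`. -/
def DSet (Θ : Circle2pi → (E →L[ℂ] E)) : Set (Lp E 2 haarCircle2pi) :=
  {f | ∃ x : E, (⇑f) =ᵐ[haarCircle2pi]
    fun t => x - Θ t (adjoint (fourierCoeff Θ 0) x)}

/-- The subspace `D_* = {(1/z)(Θ(z) - Θ(0)) x : x ∈ E}` of `K_Θ`, described through
boundary values. -/
def DStarSet (Θ : Circle2pi → (E →L[ℂ] E)) : Set (Lp E 2 haarCircle2pi) :=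
  {f | ∃ x : E, (⇑f) =ᵐ[haarCircle2pi]
    fun t => fourier (-1) t • (Θ t x - fourierCoeff Θ 0 x)}

/-- `A` is a matrix-valued truncated Toeplitz operator on `K_Θ`, i.e. `A ∈ T_Θ`: there is a
symbol `Φ ∈ L²(L(E))` such that `A f = P_Θ (Φ f)` for every `f` in
`K_Θ^∞ = K_Θ ∩ H^∞(E)`; the compression is expressed by: `A f ∈ K_Θ` and
`⟪A f, g⟫ = ⟪Φ f, g⟫` for every `g ∈ K_Θ`. -/
def MemTT (Θ : Circle2pi → (E →L[ℂ] E))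
    (A : Lp E 2 haarCircle2pi →L[ℂ] Lp E 2 haarCircle2pi) : Prop :=
  ∃ Φ : Circle2pi → (E →L[ℂ] E), MemLp Φ 2 haarCircle2pi ∧
    ∀ f, MemK Θ f → MemLp (⇑f) ⊤ haarCircle2pi →
      MemK Θ (A f) ∧ ∀ g, MemK Θ g → ⟪A f, g⟫ = ∫ t, ⟪Φ t (f t), g t⟫ ∂haarCircle2pi

/-! It suffices that `z f ∈ K_Θ`: then `S_Θ f - z f` lies in `K_Θ` and is orthogonal to it.
For `g ∈ H²(E)` with `x = g(0)` write `z̄ Θ g = Θ k + z̄ (Θ - Θ(0)) x + z̄ Θ(0) x`, where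
`k = (g - x)/z ∈ H²(E)`. Then `f` is orthogonal to each term: to `Θ k` because `f ⊥ Θ H²(E)`,
to the second because it lies in `D_*`, and to the third because `f̂(-1) = 0`. Hence
`⟪z f, Θ g⟫ = ⟪f, z̄ Θ g⟫ = 0`. -/

theorem MeasureTheory.MemLp.integrable_inner {α F : Type*} [MeasurableSpace α] {μ : Measure α}
    [NormedAddCommGroup F] [InnerProductSpace ℂ F] {f g : α → F}
    (hf : MemLp f 2 μ) (hg : MemLp g 2 μ) : Integrable (fun t => ⟪f t, g t⟫) μ :=
  (L2.integrable_inner (hf.toLp f) (hg.toLp g)).congr <| by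
    filter_upwards [hf.coeFn_toLp, hg.coeFn_toLp] with t hft hgt
    rw [hft, hgt]

section FourierCoeff

variable {T : ℝ} [Fact (0 < T)] {F : Type*} [NormedAddCommGroup F] [NormedSpace ℂ F]

theorem MeasureTheory.MemLp.fourier_smul {p : ENNReal} {f : AddCircle T → F}
    (hf : MemLp f p AddCircle.haarAddCircle) (n : ℤ) :
    MemLp (fun t => fourier n t • f t) p AddCircle.haarAddCircle := by
  refine ⟨(fourier n).continuous.aestronglyMeasurable.smul hf.1, ?_⟩
  rw [eLpNorm_congr_norm_ae (g := f) (.of_forall fun t => by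
    simp [norm_smul, fourier_apply, Circle.norm_coe])]
  exact hf.2

theorem fourierCoeff_fourier_smul (f : AddCircle T → F) (m n : ℤ) :
    fourierCoeff (fun t => fourier m t • f t) n = fourierCoeff f (n - m) := by
  simp only [fourierCoeff, smul_smul, ← fourier_add, neg_sub, neg_add_eq_sub]

theorem fourierCoeff_sub {f g : AddCircle T → F} (hf : Integrable f AddCircle.haarAddCircle)
    (hg : Integrable g AddCircle.haarAddCircle) (n : ℤ) :
    fourierCoeff (f - g) n = fourierCoeff f n - fourierCoeff g n := by
  simp only [fourierCoeff, Pi.sub_apply, smul_sub]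
  exact integral_sub (hf.fourier_smul _) (hg.fourier_smul _)

theorem fourierCoeff_const [CompleteSpace F] (x : F) (n : ℤ) :
    fourierCoeff (fun _ : AddCircle T => x) n = if n = 0 then x else 0 := by
  rw [fourierCoeff, integral_smul_const]
  split_ifs with hn
  · simp [hn]
  · rw [integral_eq_zero_of_add_right_eq_neg
      (fourier_add_half_inv_index (neg_ne_zero.mpr hn) Fact.out), zero_smul]

end FourierCoeff

open scoped ComplexConjugate in
theorem integral_inner_fourier_smul_const {T : ℝ} [Fact (0 < T)] {F : Type*}
    [NormedAddCommGroup F] [InnerProductSpace ℂ F] [CompleteSpace F] {f : AddCircle T → F}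
    (hf : Integrable f AddCircle.haarAddCircle) (n : ℤ) (y : F) :
    ∫ t, ⟪f t, fourier n t • y⟫ ∂AddCircle.haarAddCircle = ⟪fourierCoeff f n, y⟫ := by
  have hpt (t : AddCircle T) :
      ⟪f t, fourier n t • y⟫ = conj ⟪y, fourier (-n) t • f t⟫ := by
    rw [inner_conj_symm, inner_smul_left, inner_smul_right, fourier_neg, conj_conj]
  simp_rw [hpt, integral_conj, integral_inner (hf.fourier_smul _), fourierCoeff, inner_conj_symm]

section Shifts

variable {T : ℝ} [Fact (0 < T)] {F : Type*} [NormedAddCommGroup F] [NormedSpace ℂ F]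

def fourierSmulLp (n : ℤ) (f : Lp F 2 (AddCircle.haarAddCircle (T := T))) :
    Lp F 2 (AddCircle.haarAddCircle (T := T)) :=
  ((Lp.memLp f).fourier_smul n).toLp _

theorem coeFn_fourierSmulLp (n : ℤ) (f : Lp F 2 (AddCircle.haarAddCircle (T := T))) :
    ⇑(fourierSmulLp n f) =ᵐ[AddCircle.haarAddCircle] fun t => fourier n t • f t :=
  MemLp.coeFn_toLp _

def backwardShift (g : Lp F 2 (AddCircle.haarAddCircle (T := T))) :
    Lp F 2 (AddCircle.haarAddCircle (T := T)) :=
  fourierSmulLp (-1) (g - Lp.const 2 AddCircle.haarAddCircle (fourierCoeff g 0))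

theorem coeFn_backwardShift (g : Lp F 2 (AddCircle.haarAddCircle (T := T))) :
    ⇑(backwardShift g) =ᵐ[AddCircle.haarAddCircle]
      fun t => fourier (-1) t • (g t - fourierCoeff g 0) := by
  unfold backwardShift
  set c := Lp.const 2 (AddCircle.haarAddCircle (T := T)) (fourierCoeff g 0)
  have hc : ⇑c =ᵐ[AddCircle.haarAddCircle] fun _ => fourierCoeff g 0 := Lp.coeFn_const _ _ _
  filter_upwards [coeFn_fourierSmulLp (-1) (g - c), Lp.coeFn_sub g c, hc]
    with t hshift hsub hconst
  rw [hshift, hsub, Pi.sub_apply, hconst]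

end Shifts

section HardySpace

variable {V : Type} [NormedAddCommGroup V] [InnerProductSpace ℂ V]

theorem MemH2.sub {f g : Lp V 2 haarCircle2pi} (hf : MemH2 f) (hg : MemH2 g) :
    MemH2 (f - g) := fun n hn => by
  rw [fourierCoeff_congr_ae (Lp.coeFn_sub f g), fourierCoeff_sub
    ((Lp.memLp f).integrable one_le_two) ((Lp.memLp g).integrable one_le_two), hf n hn,
    hg n hn, sub_zero]

theorem MemH2.fourierSmulLp_of_nonneg {f : Lp V 2 haarCircle2pi} (hf : MemH2 f) {m : ℤ}
    (hm : 0 ≤ m) :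
    MemH2 (fourierSmulLp m f) := fun n hn => by
  rw [fourierCoeff_congr_ae (coeFn_fourierSmulLp m f), fourierCoeff_fourier_smul]
  exact hf _ (by omega)

theorem MemH2.backwardShift [CompleteSpace V] {g : Lp V 2 haarCircle2pi} (hg : MemH2 g) :
    MemH2 (backwardShift g) := fun n hn => by
  have hsub : fourierCoeff (fun t => g t - fourierCoeff g 0) (n + 1) = 0 := by
    rw [show (fun t => g t - fourierCoeff g 0) = ⇑g - fun _ => fourierCoeff g 0 from rfl,
      fourierCoeff_sub ((Lp.memLp g).integrable one_le_two) (integrable_const _),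
      fourierCoeff_const]
    rcases eq_or_lt_of_le (show n + 1 ≤ 0 by omega) with h0 | hneg
    · rw [h0, if_pos rfl, sub_self]
    · rw [hg _ hneg, if_neg hneg.ne, sub_zero]
  rw [fourierCoeff_congr_ae (coeFn_backwardShift g), fourierCoeff_fourier_smul, sub_neg_eq_add,
    hsub]

end HardySpace

section ModelSpace

variable {V : Type} [NormedAddCommGroup V] [InnerProductSpace ℂ V] [FiniteDimensional ℂ V]
  {Θ : Circle2pi → (V →L[ℂ] V)}

theorem IsInner.memLp_apply (hΘ : IsInner Θ) {g : Circle2pi → V}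
    (hg : MemLp g 2 haarCircle2pi) : MemLp (fun t => Θ t (g t)) 2 haarCircle2pi :=
  hg.mono (isBoundedBilinearMap_apply.continuous.comp_aestronglyMeasurable (hΘ.meas.prodMk hg.1))
    (by filter_upwards [hΘ.unit] with t ht using (norm_map_of_mem_unitary ht _).le)

theorem IsInner.memK_sub (hΘ : IsInner Θ) {f g : Lp V 2 haarCircle2pi} (hf : MemK Θ f)
    (hg : MemK Θ g) : MemK Θ (f - g) := by
  refine ⟨hf.1.sub hg.1, fun k hk => ?_⟩
  have hΘk := hΘ.memLp_apply (Lp.memLp k)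
  have hsub : (fun t => ⟪(f - g) t, Θ t (k t)⟫) =ᵐ[haarCircle2pi]
      fun t => ⟪f t, Θ t (k t)⟫ - ⟪g t, Θ t (k t)⟫ := by
    filter_upwards [Lp.coeFn_sub f g] with t ht
    rw [ht, Pi.sub_apply, inner_sub_left]
  rw [integral_congr_ae hsub, integral_sub ((Lp.memLp f).integrable_inner hΘk)
    ((Lp.memLp g).integrable_inner hΘk), hf.2 k hk, hg.2 k hk, sub_zero]

theorem integral_inner_eq_zero_of_orth_DStarSet (hΘ : IsInner Θ) {f : Lp V 2 haarCircle2pi}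
    (hfD : ∀ g ∈ DStarSet Θ, ⟪f, g⟫ = (0 : ℂ)) (x : V) :
    ∫ t, ⟪f t, fourier (-1) t • (Θ t x - fourierCoeff Θ 0 x)⟫ ∂haarCircle2pi = 0 := by
  have hd := ((hΘ.memLp_apply (memLp_const x)).sub
    (memLp_const (fourierCoeff Θ 0 x))).fourier_smul (-1)
  rw [← hfD _ ⟨x, hd.coeFn_toLp⟩, L2.inner_def]
  exact integral_congr_ae (by filter_upwards [hd.coeFn_toLp] with t ht; rw [ht, Pi.sub_apply])

theorem IsInner.memK_fourierSmulLp_one_of_orth_DStarSet (hΘ : IsInner Θ)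
    {f : Lp V 2 haarCircle2pi} (hf : MemK Θ f)
    (hfD : ∀ g ∈ DStarSet Θ, ⟪f, g⟫ = (0 : ℂ)) : MemK Θ (fourierSmulLp 1 f) := by
  refine ⟨hf.1.fourierSmulLp_of_nonneg zero_le_one, fun g hg => ?_⟩
  set x := fourierCoeff g 0
  set y := fourierCoeff Θ 0 x
  set k := backwardShift g
  have hsplit : (fun t => ⟪fourierSmulLp 1 f t, Θ t (g t)⟫) =ᵐ[haarCircle2pi]
      fun t => ⟪f t, Θ t (k t)⟫ + ⟪f t, fourier (-1) t • (Θ t x - y)⟫ +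
        ⟪f t, fourier (-1) t • y⟫ := by
    filter_upwards [coeFn_fourierSmulLp 1 f, coeFn_backwardShift g] with t hft hkt
    rw [hft, hkt, ← inner_add_right, ← inner_add_right, inner_smul_left, ← inner_smul_right,
      ← fourier_neg, map_smul, map_sub, ← smul_add, ← smul_add]
    congr 2
    abel
  have hf2 := Lp.memLp f
  have hΘk := hΘ.memLp_apply (Lp.memLp k)
  have hd : MemLp (fun t => fourier (-1) t • (Θ t x - y)) 2 haarCircle2pi :=
    ((hΘ.memLp_apply (memLp_const x)).sub (memLp_const y)).fourier_smul (-1)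
  have hc : MemLp (fun t => fourier (-1) t • y) 2 haarCircle2pi :=
    (memLp_const y).fourier_smul (-1)
  rw [integral_congr_ae hsplit, integral_add ?_ (hf2.integrable_inner hc),
    integral_add (hf2.integrable_inner hΘk) (hf2.integrable_inner hd), hf.2 k hg.backwardShift,
    integral_inner_eq_zero_of_orth_DStarSet hΘ hfD x,
    integral_inner_fourier_smul_const (hf2.integrable one_le_two), hf.1 (-1) (by norm_num),
    inner_zero_left, add_zero, add_zero]
  exact (hf2.integrable_inner hΘk).add (hf2.integrable_inner hd)

theorem IsCompShift.eq_fourierSmulLp_one (hΘ : IsInner Θ)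
    {S : Lp V 2 haarCircle2pi →L[ℂ] Lp V 2 haarCircle2pi} (hS : IsCompShift Θ S)
    {f : Lp V 2 haarCircle2pi} (hf : MemK Θ f) (hzf : MemK Θ (fourierSmulLp 1 f)) :
    S f = fourierSmulLp 1 f := by
  set u := S f - fourierSmulLp 1 f
  have hu : MemK Θ u := hΘ.memK_sub (hS f hf).1 hzf
  have hzf_inner :
      ⟪fourierSmulLp 1 f, u⟫ = ∫ t, ⟪fourier 1 t • f t, u t⟫ ∂haarCircle2pi := by
    rw [L2.inner_def]
    exact integral_congr_ae (by filter_upwards [coeFn_fourierSmulLp 1 f] with t ht; rw [ht])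
  have huu : ⟪u, u⟫ = (0 : ℂ) := by
    rw [inner_sub_left, (hS f hf).2 u hu, hzf_inner, sub_self]
  exact sub_eq_zero.mp (inner_self_eq_zero.mp huu)

end ModelSpace

/-- Let `Θ` be inner and `S_Θ` the compressed shift on `K_Θ`.
If `f ∈ K_Θ` is orthogonal to `D_* = {(1/z)(Θ(z) - Θ(0)) x : x ∈ E}`, then
`(S_Θ f)(z) = z f(z)`. -/
theorem compShift_apply_of_orth_DStarSet (Θ : Circle2pi → (E →L[ℂ] E)) (hΘ : IsInner Θ)
    (S : Lp E 2 haarCircle2pi →L[ℂ] Lp E 2 haarCircle2pi) (hS : IsCompShift Θ S)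
    (f : Lp E 2 haarCircle2pi) (hf : MemK Θ f)
    (hfD : ∀ g ∈ DStarSet Θ, ⟪f, g⟫ = (0 : ℂ)) :
    (⇑(S f)) =ᵐ[haarCircle2pi] fun t => fourier 1 t • f t := by
  rw [hS.eq_fourierSmulLp_one hΘ hf (hΘ.memK_fourierSmulLp_one_of_orth_DStarSet hf hfD)]
  exact coeFn_fourierSmulLp 1 f
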